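/- arXiv:2111.01290 — 4 statements merged into one kernel-verified Lean document; each statement's English description precedes it below -/
import Mathlib

section
/- Let g, h : ℝⁿ → ℝ be strongly convex with modulus σ > 0 and assume φ := g − h is bounded below. Let ρ > 0 and let sequences (x^k), (y^k), (w^k) in ℝⁿ, stepsizes t_k > 0 and parameters ν_k ≥ 0 satisfy, for every k: w^k ∈ ∂h(x^k), w^k ∈ ∂g(y^k), d^k := y^k − x^k, x^{k+1} = y^k + t_k d^k, and φ(x^{k+1}) ≤ φ(y^k) − ρ t_k² ‖d^k‖² + ν_k. If the ν_k are chosen according to strategy (S1) (i.e. ν_{k+1} ≤ (1 − δ_{k+1})(φ(x^k) − φ(x^{k+1}) + ν_k) with δ_{k+1} ∈ [δ_min, 1], δ_min ∈ [0,1)) and ν_k → 0, then every cluster point of (x^k) is a critical point of φ, i.e. for every cluster point x̄ there exists w̄ ∈ ∂g(x̄) ∩ ∂h(x̄). -/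
/-!
Adding the strong subgradient inequalities of `h` at `x k` and of `g` at `y k` (both with the
subgradient `w k`) gives `σ ‖y k - x k‖² ≤ (g - h) (x k) - (g - h) (y k)`. With the line search this
makes `(g - h) (x k) + ν k` nonincreasing under (S1); being bounded below, its decrements, which
dominate `σ ‖y k - x k‖² - ν (k + 1)`, tend to zero, hence `y k - x k → 0`. Along a subsequence
with `x k → xbar` therefore also `y k → xbar`, the subgradients `w k` stay bounded because `h` is
continuous, and any limit point of them lies in `∂g xbar ∩ ∂h xbar` because subdifferential graphs
of continuous functions are closed.
-/

open Set Filter Topology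

noncomputable section

/-- The (convex-analysis) subdifferential of `f` at `x`:
the set of `w` with `f z ≥ f x + ⟨w, z - x⟩` for all `z`. -/
def subdiff {n : ℕ} (f : EuclideanSpace ℝ (Fin n) → ℝ) (x : EuclideanSpace ℝ (Fin n)) :
    Set (EuclideanSpace ℝ (Fin n)) :=
  {w | ∀ z, f x + (inner ℝ w (z - x) : ℝ) ≤ f z}

/-- `f` is strongly convex with modulus `σ`. -/
def StrongConvexWith {n : ℕ} (σ : ℝ) (f : EuclideanSpace ℝ (Fin n) → ℝ) : Prop :=
  ∀ x y : EuclideanSpace ℝ (Fin n), ∀ t : ℝ, 0 < t → t < 1 →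
    f (t • x + (1 - t) • y) ≤ t * f x + (1 - t) * f y - σ / 2 * (t * (1 - t) * ‖x - y‖ ^ 2)

namespace StrongConvexWith

variable {n : ℕ} {σ : ℝ} {f : EuclideanSpace ℝ (Fin n) → ℝ}

theorem convexOn (hσ : 0 ≤ σ) (hf : StrongConvexWith σ f) : ConvexOn ℝ univ f := by
  refine ⟨convex_univ, fun x _ y _ a b ha hb hab => ?_⟩
  obtain rfl : b = 1 - a := by linarith
  rcases ha.eq_or_lt with rfl | ha0
  · simp
  rcases hb.eq_or_lt with hb0 | hb0
  · obtain rfl : a = 1 := by linarith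
    simp
  have hstrong := hf x y a ha0 (by linarith)
  have : 0 ≤ σ / 2 * (a * (1 - a) * ‖x - y‖ ^ 2) := by positivity
  simp only [smul_eq_mul]
  linarith

theorem continuous (hσ : 0 ≤ σ) (hf : StrongConvexWith σ f) : Continuous f :=
  continuousOn_univ.mp ((hf.convexOn hσ).continuousOn isOpen_univ)

theorem add_inner_add_sq_norm_le (hf : StrongConvexWith σ f) {x w : EuclideanSpace ℝ (Fin n)}
    (hw : w ∈ subdiff f x) (z : EuclideanSpace ℝ (Fin n)) :
    f x + inner ℝ w (z - x) + σ / 2 * ‖z - x‖ ^ 2 ≤ f z := by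
  -- Compare the subgradient inequality at `x + t (z - x)` with strong convexity, divide by `t`
  -- and let `t → 0⁺`.
  have hscaled : ∀ t : ℝ, 0 < t → t < 1 →
      inner ℝ w (z - x) + σ / 2 * ((1 - t) * ‖z - x‖ ^ 2) ≤ f z - f x := by
    intro t ht0 ht1
    have hconv := hf z x t ht0 ht1
    have hsub := hw (t • z + (1 - t) • x)
    rw [show t • z + (1 - t) • x - x = t • (z - x) by module, real_inner_smul_right] at hsub
    refine le_of_mul_le_mul_left ?_ ht0
    linear_combination hsub + hconv
  have hlim : Tendsto (fun t : ℝ => inner ℝ w (z - x) + σ / 2 * ((1 - t) * ‖z - x‖ ^ 2))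
      (𝓝[>] 0) (𝓝 (inner ℝ w (z - x) + σ / 2 * ‖z - x‖ ^ 2)) :=
    (Continuous.tendsto' (by fun_prop) 0 _ (by simp)).mono_left nhdsWithin_le_nhds
  have hlt_one : ∀ᶠ t in 𝓝[>] (0 : ℝ), t < 1 := nhdsWithin_le_nhds (gt_mem_nhds one_pos)
  have := le_of_tendsto hlim
    (by filter_upwards [self_mem_nhdsWithin, hlt_one] with t ht0 ht1 using hscaled t ht0 ht1)
  linarith

end StrongConvexWith

section Subdiff

variable {n : ℕ} {f : EuclideanSpace ℝ (Fin n) → ℝ}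

theorem norm_le_of_mem_subdiff {x w : EuclideanSpace ℝ (Fin n)} {M : ℝ}
    (hw : w ∈ subdiff f x) (hM : ∀ z ∈ Metric.closedBall x 1, f z ≤ M) :
    ‖w‖ ≤ M - f x := by
  rcases eq_or_ne w 0 with rfl | hw0
  · simpa using hM x (Metric.mem_closedBall_self zero_le_one)
  have hnorm : ‖w‖ ≠ 0 := norm_ne_zero_iff.mpr hw0
  have hz : x + ‖w‖⁻¹ • w ∈ Metric.closedBall x 1 := by
    simp [norm_smul, hnorm]
  have hinner : inner ℝ w (x + ‖w‖⁻¹ • w - x) = ‖w‖ := by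
    rw [add_sub_cancel_left, real_inner_smul_right, real_inner_self_eq_norm_sq]
    field_simp
  have := hw (x + ‖w‖⁻¹ • w)
  linarith [hM _ hz]

theorem exists_eventually_norm_le_of_mem_subdiff {ι : Type*} {l : Filter ι}
    (hf : Continuous f) {x w : ι → EuclideanSpace ℝ (Fin n)} {xbar : EuclideanSpace ℝ (Fin n)}
    (hx : Tendsto x l (𝓝 xbar)) (hw : ∀ k, w k ∈ subdiff f (x k)) :
    ∃ C, ∀ᶠ k in l, ‖w k‖ ≤ C := by
  obtain ⟨zmax, -, hzmax⟩ := (isCompact_closedBall xbar 2).exists_isMaxOn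
    (Metric.nonempty_closedBall.mpr zero_le_two) hf.continuousOn
  refine ⟨f zmax - f xbar + 1, ?_⟩
  filter_upwards [Metric.tendsto_nhds.mp hx 1 one_pos,
    (hf.tendsto xbar).comp hx |>.eventually (eventually_gt_nhds (sub_one_lt (f xbar)))]
    with k hdist hval
  have hball : Metric.closedBall (x k) 1 ⊆ Metric.closedBall xbar 2 := by
    refine Metric.closedBall_subset_closedBall' ?_
    linarith
  have := norm_le_of_mem_subdiff (hw k) fun z hz => hzmax (hball hz)
  simp only [Function.comp_apply] at hval
  linarith

theorem mem_subdiff_of_tendsto {ι : Type*} {l : Filter ι} [l.NeBot] (hf : Continuous f)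
    {x w : ι → EuclideanSpace ℝ (Fin n)} {xbar wbar : EuclideanSpace ℝ (Fin n)}
    (hx : Tendsto x l (𝓝 xbar)) (hw : Tendsto w l (𝓝 wbar))
    (hmem : ∀ k, w k ∈ subdiff f (x k)) : wbar ∈ subdiff f xbar := fun z =>
  le_of_tendsto (((hf.tendsto xbar).comp hx).add (hw.inner (tendsto_const_nhds.sub hx)))
    (Eventually.of_forall fun k => hmem k z)

theorem exists_mem_subdiff_inter_of_tendsto {g h : EuclideanSpace ℝ (Fin n) → ℝ}
    (hg : Continuous g) (hh : Continuous h) {x y w : ℕ → EuclideanSpace ℝ (Fin n)}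
    {xbar : EuclideanSpace ℝ (Fin n)} (hx : Tendsto x atTop (𝓝 xbar))
    (hy : Tendsto y atTop (𝓝 xbar)) (hwh : ∀ k, w k ∈ subdiff h (x k))
    (hwg : ∀ k, w k ∈ subdiff g (y k)) :
    ∃ wbar, wbar ∈ subdiff g xbar ∩ subdiff h xbar := by
  obtain ⟨C, hC⟩ := exists_eventually_norm_le_of_mem_subdiff hh hx hwh
  obtain ⟨wbar, -, ψ, hψ, hwψ⟩ := tendsto_subseq_of_frequently_bounded
    (Metric.isBounded_closedBall (x := 0) (r := C))
    (hC.mono fun k hk => mem_closedBall_zero_iff.mpr hk).frequently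
  exact ⟨wbar, mem_subdiff_of_tendsto hg (hy.comp hψ.tendsto_atTop) hwψ fun k => hwg (ψ k),
    mem_subdiff_of_tendsto hh (hx.comp hψ.tendsto_atTop) hwψ fun k => hwh (ψ k)⟩

end Subdiff

theorem StrongConvexWith.mul_sq_norm_sub_le {n : ℕ} {σ : ℝ}
    {g h : EuclideanSpace ℝ (Fin n) → ℝ} (hg : StrongConvexWith σ g)
    (hh : StrongConvexWith σ h) {x y w : EuclideanSpace ℝ (Fin n)}
    (hwh : w ∈ subdiff h x) (hwg : w ∈ subdiff g y) :
    σ * ‖y - x‖ ^ 2 ≤ (g x - h x) - (g y - h y) := by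
  have hx := hh.add_inner_add_sq_norm_le hwh y
  have hy := hg.add_inner_add_sq_norm_le hwg x
  rw [← neg_sub y x, inner_neg_right, norm_neg] at hy
  linarith

theorem tendsto_zero_of_le_sub_add {F ν a : ℕ → ℝ} (hF : BddBelow (Set.range F))
    (hν : ∀ k, 0 ≤ ν k) (hν0 : Tendsto ν atTop (𝓝 0)) (ha : ∀ k, 0 ≤ a k)
    (hdesc : ∀ k, F (k + 1) ≤ F k - a k + ν k)
    (hrec : ∀ k, ν (k + 1) ≤ F k - F (k + 1) + ν k) :
    Tendsto a atTop (𝓝 0) := by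
  set Δ := fun k => F k + ν k with hΔ
  have hanti : Antitone Δ := antitone_nat_of_succ_le fun k => by
    simp only [hΔ]
    linarith [hrec k]
  obtain ⟨m, hm⟩ := hF
  have hbdd : BddBelow (Set.range Δ) := ⟨m, by
    rintro _ ⟨k, rfl⟩
    linarith [hm ⟨k, rfl⟩, hν k]⟩
  have hΔlim := tendsto_atTop_ciInf hanti hbdd
  have hupper : Tendsto (fun k => Δ k - Δ (k + 1) + ν (k + 1)) atTop (𝓝 0) := by
    simpa using (hΔlim.sub (hΔlim.comp (tendsto_add_atTop_nat 1))).add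
      (hν0.comp (tendsto_add_atTop_nat 1))
  refine tendsto_of_tendsto_of_tendsto_of_le_of_le tendsto_const_nhds hupper ha fun k => ?_
  simp only [hΔ]
  linarith [hdesc k]

theorem stmt9_general {n : ℕ} (g h : EuclideanSpace ℝ (Fin n) → ℝ) (σ ρ : ℝ)
    (hσ : 0 < σ) (hρ : 0 < ρ)
    (hgs : StrongConvexWith σ g) (hhs : StrongConvexWith σ h)
    (hbd : BddBelow (Set.range fun z => g z - h z))
    (x y w : ℕ → EuclideanSpace ℝ (Fin n)) (t ν : ℕ → ℝ)
    (hν : ∀ k, 0 ≤ ν k)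
    (hwh : ∀ k, w k ∈ subdiff h (x k)) (hwg : ∀ k, w k ∈ subdiff g (y k))
    (hls : ∀ k, g (x (k + 1)) - h (x (k + 1)) ≤
      (g (y k) - h (y k)) - ρ * t k ^ 2 * ‖y k - x k‖ ^ 2 + ν k)
    (δ : ℕ → ℝ) (δmin : ℝ) (hδmin0 : 0 ≤ δmin)
    (hδ : ∀ k, δmin ≤ δ (k + 1) ∧ δ (k + 1) ≤ 1)
    (hrec : ∀ k, ν (k + 1) ≤ (1 - δ (k + 1)) *
      ((g (x k) - h (x k)) - (g (x (k + 1)) - h (x (k + 1))) + ν k))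
    (hν0 : Filter.Tendsto ν Filter.atTop (nhds 0)) :
    ∀ xbar : EuclideanSpace ℝ (Fin n),
      (∃ φ : ℕ → ℕ, StrictMono φ ∧
        Filter.Tendsto (fun ℓ => x (φ ℓ)) Filter.atTop (nhds xbar)) →
      ∃ wbar, wbar ∈ subdiff g xbar ∩ subdiff h xbar := by
  rintro xbar ⟨φ, hφ, hxφ⟩
  have hdesc : ∀ k, g (x (k + 1)) - h (x (k + 1)) ≤
      (g (x k) - h (x k)) - σ * ‖y k - x k‖ ^ 2 + ν k := by
    intro k
    have hρt : 0 ≤ ρ * t k ^ 2 * ‖y k - x k‖ ^ 2 := by positivity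
    linarith [hls k, hgs.mul_sq_norm_sub_le hhs (hwh k) (hwg k)]
  have hrec' : ∀ k, ν (k + 1) ≤ (g (x k) - h (x k)) - (g (x (k + 1)) - h (x (k + 1))) + ν k := by
    intro k
    have hdecrease : 0 ≤ (g (x k) - h (x k)) - (g (x (k + 1)) - h (x (k + 1))) + ν k := by
      have : 0 ≤ σ * ‖y k - x k‖ ^ 2 := by positivity
      linarith [hdesc k]
    nlinarith [hrec k, mul_nonneg (hδmin0.trans (hδ k).1) hdecrease]
  have hsq := tendsto_zero_of_le_sub_add (hbd.mono (Set.range_comp_subset_range x _)) hν hν0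
    (fun k => by positivity) hdesc hrec'
  have hdiff : Tendsto (fun k => y k - x k) atTop (𝓝 0) := by
    rw [tendsto_zero_iff_norm_tendsto_zero]
    simpa [hσ.ne', Real.sqrt_sq (norm_nonneg _)] using (hsq.div_const σ).sqrt
  have hyφ : Tendsto (fun ℓ => y (φ ℓ)) atTop (𝓝 xbar) := by
    simpa using (hdiff.comp hφ.tendsto_atTop).add hxφ
  exact exists_mem_subdiff_inter_of_tendsto (hgs.continuous hσ.le) (hhs.continuous hσ.le)
    hxφ hyφ (fun ℓ => hwh (φ ℓ)) fun ℓ => hwg (φ ℓ)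

theorem stmt9 {n : ℕ} (g h : EuclideanSpace ℝ (Fin n) → ℝ) (σ ρ : ℝ)
    (hσ : 0 < σ) (hρ : 0 < ρ)
    (hgs : StrongConvexWith σ g) (hhs : StrongConvexWith σ h)
    (hbd : BddBelow (Set.range fun z => g z - h z))
    (x y w : ℕ → EuclideanSpace ℝ (Fin n)) (t ν : ℕ → ℝ)
    (ht : ∀ k, 0 < t k) (hν : ∀ k, 0 ≤ ν k)
    (hwh : ∀ k, w k ∈ subdiff h (x k)) (hwg : ∀ k, w k ∈ subdiff g (y k))
    (hstep : ∀ k, x (k + 1) = y k + t k • (y k - x k))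
    (hls : ∀ k, g (x (k + 1)) - h (x (k + 1)) ≤
      (g (y k) - h (y k)) - ρ * t k ^ 2 * ‖y k - x k‖ ^ 2 + ν k)
    (δ : ℕ → ℝ) (δmin : ℝ) (hδmin0 : 0 ≤ δmin) (hδmin1 : δmin < 1)
    (hδ : ∀ k, δmin ≤ δ (k + 1) ∧ δ (k + 1) ≤ 1)
    (hrec : ∀ k, ν (k + 1) ≤ (1 - δ (k + 1)) *
      ((g (x k) - h (x k)) - (g (x (k + 1)) - h (x (k + 1))) + ν k))
    (hν0 : Filter.Tendsto ν Filter.atTop (nhds 0)) :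
    ∀ xbar : EuclideanSpace ℝ (Fin n),
      (∃ φ : ℕ → ℕ, StrictMono φ ∧
        Filter.Tendsto (fun ℓ => x (φ ℓ)) Filter.atTop (nhds xbar)) →
      ∃ wbar, wbar ∈ subdiff g xbar ∩ subdiff h xbar :=
  stmt9_general g h σ ρ hσ hρ hgs hhs hbd x y w t ν hν hwh hwg hls δ δmin hδmin0 hδ hrec hν0
end
end

section
/- Let g, h : ℝⁿ → ℝ be strongly convex with modulus σ > 0, let φ := g − h satisfy φ* := inf_{x∈ℝⁿ} φ(x) > −∞, let ρ > 0, and let sequences (x^k), (y^k), (w^k) in ℝⁿ, stepsizes t_k > 0 and parameters ν_k ≥ 0 satisfy, for every k: w^k ∈ ∂h(x^k), w^k ∈ ∂g(y^k), d^k := y^k − x^k, x^{k+1} = y^k + t_k d^k, and φ(x^{k+1}) ≤ φ(y^k) − ρ t_k² ‖d^k‖² + ν_k. If ∑_{k=0}^{∞} ν_k < ∞, then for every N ≥ 1: min{ ‖d^k‖ : k = 0, 1, …, N−1 } ≤ ( √( φ(x^0) − φ* + ∑_{k=0}^{∞} ν_k ) / √σ ) · (1/√N). -/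
open Set Filter Topology

noncomputable section

/-! Descent of `φ = g - h` along the iterates: the two subgradient inequalities at `xᵏ` and `yᵏ`
share the vector `wᵏ`, so adding them gives `σ ‖dᵏ‖² ≤ φ(xᵏ) - φ(yᵏ)`, and with the line search
`φ(xᵏ⁺¹) ≤ φ(xᵏ) - σ ‖dᵏ‖² + νᵏ`. Telescoping bounds `σ ∑_{k<N} ‖dᵏ‖²` by
`φ(x⁰) - φ* + ∑ νᵏ`, and the smallest of the `N` terms is at most their average. -/

theorem StrongConvexWith.add_inner_add_sq_le_of_mem_subdiff {n : ℕ}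
    {f : EuclideanSpace ℝ (Fin n) → ℝ} {σ : ℝ} (hf : StrongConvexWith σ f)
    {x w : EuclideanSpace ℝ (Fin n)} (hw : w ∈ subdiff f x) (z : EuclideanSpace ℝ (Fin n)) :
    f x + inner ℝ w (z - x) + σ / 2 * ‖z - x‖ ^ 2 ≤ f z := by
  set q : ℝ → ℝ := fun s => inner ℝ w (z - x) + σ / 2 * ((1 - s) * ‖z - x‖ ^ 2)
  -- Compare the subgradient inequality at `s • z + (1 - s) • x` with strong convexity,
  -- divide by `s` and let `s → 0⁺`.
  have hq : ∀ s ∈ Ioo (0 : ℝ) 1, q s ≤ f z - f x := by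
    rintro s ⟨hs₀, hs₁⟩
    have hsub := hw (s • z + (1 - s) • x)
    have hseg : s • z + (1 - s) • x - x = s • (z - x) := by
      rw [smul_sub, sub_smul, one_smul]; abel
    rw [hseg, real_inner_smul_right] at hsub
    have hconv := hf z x s hs₀ hs₁
    have : s * q s ≤ s * (f z - f x) := by simp only [q]; nlinarith
    exact le_of_mul_le_mul_left this hs₀
  have hlim : Tendsto q (𝓝[>] 0) (𝓝 (q 0)) :=
    ((by fun_prop : Continuous q).tendsto 0).mono_left nhdsWithin_le_nhds
  have := le_of_tendsto hlim (Filter.mem_of_superset (Ioo_mem_nhdsGT one_pos) hq)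
  simp only [q, sub_zero, one_mul] at this
  linarith

theorem mul_sq_norm_sub_le_sub_of_mem_subdiff {n : ℕ} {g h : EuclideanSpace ℝ (Fin n) → ℝ}
    {σg σh : ℝ} (hg : StrongConvexWith σg g) (hh : StrongConvexWith σh h)
    {x y w : EuclideanSpace ℝ (Fin n)} (hwh : w ∈ subdiff h x) (hwg : w ∈ subdiff g y) :
    (σg + σh) / 2 * ‖y - x‖ ^ 2 ≤ (g x - h x) - (g y - h y) := by
  have hx := hh.add_inner_add_sq_le_of_mem_subdiff hwh y
  have hy := hg.add_inner_add_sq_le_of_mem_subdiff hwg x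
  rw [← neg_sub y x, inner_neg_right, norm_neg] at hy
  linarith

theorem sum_range_add_le_of_le_sub_add {α : Type*} [AddCommGroup α] [PartialOrder α]
    [IsOrderedAddMonoid α] {a b c : ℕ → α} (h : ∀ k, a (k + 1) ≤ a k - b k + c k) (N : ℕ) :
    ∑ k ∈ Finset.range N, b k + a N ≤ a 0 + ∑ k ∈ Finset.range N, c k := by
  induction N with
  | zero => simp
  | succ m ih =>
    calc ∑ k ∈ Finset.range (m + 1), b k + a (m + 1)
        ≤ ∑ k ∈ Finset.range m, b k + b m + (a m - b m + c m) := by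
          rw [Finset.sum_range_succ]; gcongr; exact h m
      _ = ∑ k ∈ Finset.range m, b k + a m + c m := by abel
      _ ≤ a 0 + ∑ k ∈ Finset.range m, c k + c m := by gcongr
      _ = a 0 + ∑ k ∈ Finset.range (m + 1), c k := by rw [Finset.sum_range_succ, add_assoc]

theorem exists_lt_le_sqrt_of_sum_range_mul_sq_le {u : ℕ → ℝ} {σ C : ℝ} (hσ : 0 < σ) {N : ℕ}
    (hN : 1 ≤ N) (hsum : ∑ k ∈ Finset.range N, σ * u k ^ 2 ≤ C) :
    ∃ k < N, u k ≤ Real.sqrt C / Real.sqrt σ * (1 / Real.sqrt N) := by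
  have hN₀ : (0 : ℝ) < N := by exact_mod_cast hN
  have hconst : ∑ _k ∈ Finset.range N, C / N = C := by
    rw [Finset.sum_const, Finset.card_range, nsmul_eq_mul]; field_simp
  obtain ⟨k, hk, hle⟩ := Finset.exists_le_of_sum_le (Finset.nonempty_range_iff.mpr (by omega))
    (hsum.trans hconst.ge)
  refine ⟨k, Finset.mem_range.mp hk, ?_⟩
  have hsq : u k ^ 2 ≤ C / (σ * N) := by
    rw [le_div_iff₀ (by positivity)]
    rw [le_div_iff₀ hN₀] at hle
    linarith
  calc u k ≤ |u k| := le_abs_self _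
    _ ≤ Real.sqrt (C / (σ * N)) := Real.abs_le_sqrt hsq
    _ = Real.sqrt C / Real.sqrt σ * (1 / Real.sqrt N) := by
      rw [Real.sqrt_div' _ (by positivity), Real.sqrt_mul hσ.le]
      ring

theorem stmt12_general {n : ℕ} (g h : EuclideanSpace ℝ (Fin n) → ℝ) (σ ρ : ℝ)
    (hσ : 0 < σ) (hρ : 0 < ρ)
    (hgs : StrongConvexWith σ g) (hhs : StrongConvexWith σ h)
    (hbd : BddBelow (Set.range fun z => g z - h z))
    (x y w : ℕ → EuclideanSpace ℝ (Fin n)) (t ν : ℕ → ℝ)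
    (hν : ∀ k, 0 ≤ ν k)
    (hwh : ∀ k, w k ∈ subdiff h (x k)) (hwg : ∀ k, w k ∈ subdiff g (y k))
    (hls : ∀ k, g (x (k + 1)) - h (x (k + 1)) ≤
      (g (y k) - h (y k)) - ρ * t k ^ 2 * ‖y k - x k‖ ^ 2 + ν k)
    (hsum : Summable ν) :
    ∀ N : ℕ, 1 ≤ N → ∃ k < N, ‖y k - x k‖ ≤
      Real.sqrt ((g (x 0) - h (x 0)) - (⨅ z, (g z - h z)) + ∑' k, ν k) / Real.sqrt σ *
        (1 / Real.sqrt N) := by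
  intro N hN
  have hdescent : ∀ k, g (x (k + 1)) - h (x (k + 1)) ≤
      (g (x k) - h (x k)) - σ * ‖y k - x k‖ ^ 2 + ν k := by
    intro k
    have hgap := mul_sq_norm_sub_le_sub_of_mem_subdiff hgs hhs (hwh k) (hwg k)
    have hls_nonneg : 0 ≤ ρ * t k ^ 2 * ‖y k - x k‖ ^ 2 := by positivity
    linarith [hls k]
  have htel := sum_range_add_le_of_le_sub_add (a := fun k => g (x k) - h (x k))
    (b := fun k => σ * ‖y k - x k‖ ^ 2) hdescent N
  have hinf : ⨅ z, (g z - h z) ≤ g (x N) - h (x N) := ciInf_le hbd (x N)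
  have hpartial : ∑ k ∈ Finset.range N, ν k ≤ ∑' k, ν k :=
    hsum.sum_le_tsum _ fun k _ => hν k
  exact exists_lt_le_sqrt_of_sum_range_mul_sq_le hσ hN (by linarith)

theorem stmt12 {n : ℕ} (g h : EuclideanSpace ℝ (Fin n) → ℝ) (σ ρ : ℝ)
    (hσ : 0 < σ) (hρ : 0 < ρ)
    (hgs : StrongConvexWith σ g) (hhs : StrongConvexWith σ h)
    (hbd : BddBelow (Set.range fun z => g z - h z))
    (x y w : ℕ → EuclideanSpace ℝ (Fin n)) (t ν : ℕ → ℝ)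
    (ht : ∀ k, 0 < t k) (hν : ∀ k, 0 ≤ ν k)
    (hwh : ∀ k, w k ∈ subdiff h (x k)) (hwg : ∀ k, w k ∈ subdiff g (y k))
    (hstep : ∀ k, x (k + 1) = y k + t k • (y k - x k))
    (hls : ∀ k, g (x (k + 1)) - h (x (k + 1)) ≤
      (g (y k) - h (y k)) - ρ * t k ^ 2 * ‖y k - x k‖ ^ 2 + ν k)
    (hsum : Summable ν) :
    ∀ N : ℕ, 1 ≤ N → ∃ k < N, ‖y k - x k‖ ≤
      Real.sqrt ((g (x 0) - h (x 0)) - (⨅ z, (g z - h z)) + ∑' k, ν k) / Real.sqrt σ *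
        (1 / Real.sqrt N) :=
  stmt12_general g h σ ρ hσ hρ hgs hhs hbd x y w t ν hν hwh hwg hls hsum
end
end

section
/- Let g : ℝⁿ → ℝ be differentiable, let h : ℝⁿ → ℝ be strongly convex with modulus σ > 0, let x, y ∈ ℝⁿ, set d := y − x, and assume ∇g(y) ∈ ∂h(x). Then for every s ∈ ∂h(y): ⟨∇g(y) − s, d⟩ ≤ −σ ‖d‖². (In particular, the one-sided directional derivative of φ = g − h at y in the direction d satisfies φ′(y; d) ≤ −σ ‖d‖², so d is a descent direction of φ at y when d ≠ 0.) -/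
open Set Filter Topology

noncomputable section

/-! Strong convexity adds the quadratic term `σ/2 ‖z - x‖²` to the subgradient inequality, so the
subdifferential of `h` is strongly monotone with modulus `σ`; apply this to `∇g(y) ∈ ∂h(x)` and
`s ∈ ∂h(y)`. -/

namespace StrongConvexWith

variable {n : ℕ} {σ : ℝ} {h : EuclideanSpace ℝ (Fin n) → ℝ}

theorem add_inner_add_le_of_mem_subdiff (hh : StrongConvexWith σ h)
    {x w : EuclideanSpace ℝ (Fin n)} (hw : w ∈ subdiff h x) (y : EuclideanSpace ℝ (Fin n)) :
    h x + inner ℝ w (y - x) + σ / 2 * ‖y - x‖ ^ 2 ≤ h y := by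
  -- Test the subgradient inequality at the point `x + t (y - x)` of the segment and let `t → 0⁺`.
  have hseg : ∀ t ∈ Ioo (0 : ℝ) 1,
      h x + inner ℝ w (y - x) + σ / 2 * ‖y - x‖ ^ 2 ≤ h y + t * (σ / 2 * ‖y - x‖ ^ 2) := by
    rintro t ⟨ht0, ht1⟩
    have hsub := hw (t • y + (1 - t) • x)
    have hconv := hh y x t ht0 ht1
    rw [show t • y + (1 - t) • x - x = t • (y - x) by module, real_inner_smul_right] at hsub
    refine le_of_mul_le_mul_left ?_ ht0
    linear_combination hsub + hconv
  have hlim : Tendsto (fun t : ℝ => h y + t * (σ / 2 * ‖y - x‖ ^ 2)) (𝓝[>] 0) (𝓝 (h y)) := by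
    have : Continuous fun t : ℝ => h y + t * (σ / 2 * ‖y - x‖ ^ 2) := by fun_prop
    simpa using (this.tendsto 0).mono_left nhdsWithin_le_nhds
  exact ge_of_tendsto hlim (eventually_of_mem (Ioo_mem_nhdsGT one_pos) hseg)

theorem le_inner_sub_of_mem_subdiff (hh : StrongConvexWith σ h)
    {x y w s : EuclideanSpace ℝ (Fin n)} (hw : w ∈ subdiff h x) (hs : s ∈ subdiff h y) :
    σ * ‖y - x‖ ^ 2 ≤ inner ℝ (s - w) (y - x) := by
  have hx := hh.add_inner_add_le_of_mem_subdiff hw y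
  have hy := hh.add_inner_add_le_of_mem_subdiff hs x
  rw [norm_sub_rev, ← neg_sub, inner_neg_right] at hy
  rw [inner_sub_left]
  linarith

end StrongConvexWith

theorem stmt15_general {n : ℕ} (h : EuclideanSpace ℝ (Fin n) → ℝ)
    (g' : EuclideanSpace ℝ (Fin n) → EuclideanSpace ℝ (Fin n))
    (σ : ℝ) (hhs : StrongConvexWith σ h)
    (x y : EuclideanSpace ℝ (Fin n)) (hgy : g' y ∈ subdiff h x) :
    ∀ s ∈ subdiff h y, (inner ℝ (g' y - s) (y - x) : ℝ) ≤ -σ * ‖y - x‖ ^ 2 := by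
  intro s hs
  have hmono := hhs.le_inner_sub_of_mem_subdiff hgy hs
  rw [← neg_sub, inner_neg_left]
  linarith

theorem stmt15 {n : ℕ} (g h : EuclideanSpace ℝ (Fin n) → ℝ)
    (g' : EuclideanSpace ℝ (Fin n) → EuclideanSpace ℝ (Fin n))
    (hgrad : ∀ z, HasGradientAt g (g' z) z)
    (σ : ℝ) (hσ : 0 < σ) (hhs : StrongConvexWith σ h)
    (x y : EuclideanSpace ℝ (Fin n)) (hgy : g' y ∈ subdiff h x) :
    ∀ s ∈ subdiff h y, (inner ℝ (g' y - s) (y - x) : ℝ) ≤ -σ * ‖y - x‖ ^ 2 :=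
  stmt15_general h g' σ hhs x y hgy
end
end

section
/- Let g : ℝⁿ → ℝ be differentiable with ∇g Lipschitz continuous with constant L > 0, let h : ℝⁿ → ℝ be strongly convex with modulus σ > 0, and set φ := g − h. Let x, y ∈ ℝⁿ with d := y − x ≠ 0 and ∇g(y) ∈ ∂h(x), and let ρ > 0 and ν ≥ 0. If μ > 0 is such that the line-search condition fails at μ, i.e. φ(y + μ d) > φ(y) − ρ μ² ‖d‖² + ν, then μ > 2σ/(L + 2ρ). (Consequently, the backtracking stepsizes of nmBDCA satisfy λ_k ≥ λ_min := min{ λ_{−1}, 2ζσ/(L + 2ρ) } for all k.) -/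
open Set Filter Topology

noncomputable section

/-
Along d = y - x, the descent lemma for the L-Lipschitz gradient gives
g(y + μd) ≤ g(y) + μ⟨∇g(y), d⟩ + (L/2) μ² ‖d‖². On the other side, ∇g(y) ∈ ∂h(x) together with
strong convexity yields the sharpened subgradient inequality at y, and writing y as the convex
combination (1+μ)⁻¹ (y + μd) + μ(1+μ)⁻¹ x gives h(y + μd) - h(y) ≥ μ⟨∇g(y), d⟩ + (σ/2) μ(2+μ) ‖d‖².
Hence φ(y + μd) - φ(y) ≤ μ‖d‖² (Lμ/2 - σ - σμ/2), and the failed line search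
φ(y + μd) - φ(y) > -ρμ²‖d‖² + ν ≥ -ρμ²‖d‖² forces μ(L + 2ρ) > 2σ + σμ > 2σ.
-/

section LipschitzGradient

variable {E : Type*} [NormedAddCommGroup E] [InnerProductSpace ℝ E] [CompleteSpace E]
  {g : E → ℝ} {g' : E → E} {L : ℝ}

theorem HasGradientAt.hasDerivAt_comp_add_smul {u c w : E} {t : ℝ}
    (hg : HasGradientAt g w (u + t • c)) :
    HasDerivAt (fun s : ℝ => g (u + s • c)) (inner ℝ w c) t := by
  have hline : HasDerivAt (fun s : ℝ => u + s • c) c t := by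
    simpa using ((hasDerivAt_id t).smul_const c).const_add u
  have := hg.hasFDerivAt.comp_hasDerivAt t hline
  simp only [InnerProductSpace.toDual_apply_apply] at this
  exact this

theorem le_add_inner_add_of_lipschitz_gradient (hgrad : ∀ z, HasGradientAt g (g' z) z)
    (hlip : ∀ u v, ‖g' u - g' v‖ ≤ L * ‖u - v‖) (u v : E) :
    g v ≤ g u + inner ℝ (g' u) (v - u) + L / 2 * ‖v - u‖ ^ 2 := by
  set c := v - u
  have hderiv := fun t : ℝ => (hgrad (u + t • c)).hasDerivAt_comp_add_smul
  have hbound : ∀ t : ℝ, HasDerivAt (fun t => g u + t * inner ℝ (g' u) c + L / 2 * t ^ 2 * ‖c‖ ^ 2)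
      (inner ℝ (g' u) c + L * t * ‖c‖ ^ 2) t := by
    intro t
    refine (((hasDerivAt_mul_const (inner ℝ (g' u) c)).const_add (g u)).add
      (((hasDerivAt_pow 2 t).const_mul (L / 2)).mul_const (‖c‖ ^ 2))).congr_deriv ?_
    push_cast
    ring
  have hslope : ∀ t ∈ Ico (0 : ℝ) 1,
      inner ℝ (g' (u + t • c)) c ≤ inner ℝ (g' u) c + L * t * ‖c‖ ^ 2 := by
    intro t ht
    have hgap : ‖g' (u + t • c) - g' u‖ ≤ L * (t * ‖c‖) := by
      simpa [norm_smul, abs_of_nonneg ht.1] using hlip (u + t • c) u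
    calc inner ℝ (g' (u + t • c)) c
        = inner ℝ (g' u) c + inner ℝ (g' (u + t • c) - g' u) c := by rw [inner_sub_left]; ring
      _ ≤ inner ℝ (g' u) c + L * (t * ‖c‖) * ‖c‖ := by
          gcongr
          exact (real_inner_le_norm _ _).trans (by gcongr)
      _ = inner ℝ (g' u) c + L * t * ‖c‖ ^ 2 := by ring
  have := image_le_of_deriv_right_le_deriv_boundary
    (fun t _ => (hderiv t).continuousAt.continuousWithinAt) (fun t _ => (hderiv t).hasDerivWithinAt)
    (by simp) (fun t _ => (hbound t).continuousAt.continuousWithinAt)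
    (fun t _ => (hbound t).hasDerivWithinAt) hslope (right_mem_Icc.2 zero_le_one)
  simpa [c] using this

end LipschitzGradient

theorem StrongConvexWith.add_inner_add_le_of_mem_subdiff_s16 {n : ℕ} {σ : ℝ}
    {f : EuclideanSpace ℝ (Fin n) → ℝ} (hf : StrongConvexWith σ f)
    {x w : EuclideanSpace ℝ (Fin n)} (hw : w ∈ subdiff f x) (z : EuclideanSpace ℝ (Fin n)) :
    f x + inner ℝ w (z - x) + σ / 2 * ‖z - x‖ ^ 2 ≤ f z := by
  have hchord : ∀ t ∈ Ioo (0 : ℝ) 1,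
      inner ℝ w (z - x) + σ / 2 * (1 - t) * ‖z - x‖ ^ 2 ≤ f z - f x := by
    rintro t ⟨ht0, ht1⟩
    have hconv := hf z x t ht0 ht1
    have hsub := hw (t • z + (1 - t) • x)
    rw [show t • z + (1 - t) • x - x = t • (z - x) by module, real_inner_smul_right] at hsub
    have : t * (inner ℝ w (z - x) + σ / 2 * (1 - t) * ‖z - x‖ ^ 2) ≤ t * (f z - f x) := by
      linarith
    exact le_of_mul_le_mul_left this ht0
  have hlim : Tendsto (fun t : ℝ => inner ℝ w (z - x) + σ / 2 * (1 - t) * ‖z - x‖ ^ 2)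
      (𝓝[>] 0) (𝓝 (inner ℝ w (z - x) + σ / 2 * ‖z - x‖ ^ 2)) :=
    ((Continuous.tendsto' (by fun_prop) 0 _ (by simp)).mono_left nhdsWithin_le_nhds)
  have := le_of_tendsto hlim (by
    filter_upwards [Ioo_mem_nhdsGT zero_lt_one] with t ht using hchord t ht)
  linarith

theorem StrongConvexWith.mul_le_extrapolate {n : ℕ} {σ μ : ℝ}
    {f : EuclideanSpace ℝ (Fin n) → ℝ} (hf : StrongConvexWith σ f) (hμ : 0 < μ)
    (x y : EuclideanSpace ℝ (Fin n)) :
    (1 + μ) * f y ≤ f (y + μ • (y - x)) + μ * f x - σ / 2 * (μ * (1 + μ)) * ‖y - x‖ ^ 2 := by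
  have hμ1 : 0 < 1 + μ := by linarith
  have hconv := hf (y + μ • (y - x)) x (1 + μ)⁻¹ (inv_pos.2 hμ1)
    (inv_lt_one_of_one_lt₀ (by linarith))
  have hy : (1 + μ)⁻¹ • (y + μ • (y - x)) + (1 - (1 + μ)⁻¹) • x = y := by
    match_scalars <;> field_simp; ring
  have hzx : ‖y + μ • (y - x) - x‖ ^ 2 = (1 + μ) ^ 2 * ‖y - x‖ ^ 2 := by
    rw [show y + μ • (y - x) - x = (1 + μ) • (y - x) by module, norm_smul, Real.norm_eq_abs,
      abs_of_pos hμ1, mul_pow]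
  rw [hy, hzx] at hconv
  calc (1 + μ) * f y
      ≤ (1 + μ) * ((1 + μ)⁻¹ * f (y + μ • (y - x)) + (1 - (1 + μ)⁻¹) * f x
          - σ / 2 * ((1 + μ)⁻¹ * (1 - (1 + μ)⁻¹) * ((1 + μ) ^ 2 * ‖y - x‖ ^ 2))) :=
        mul_le_mul_of_nonneg_left hconv hμ1.le
    _ = f (y + μ • (y - x)) + μ * f x - σ / 2 * (μ * (1 + μ)) * ‖y - x‖ ^ 2 := by
        field_simp
        ring

theorem StrongConvexWith.inner_add_le_extrapolate_sub {n : ℕ} {σ μ : ℝ}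
    {f : EuclideanSpace ℝ (Fin n) → ℝ} (hf : StrongConvexWith σ f) (hμ : 0 < μ)
    {x y w : EuclideanSpace ℝ (Fin n)} (hw : w ∈ subdiff f x) :
    μ * inner ℝ w (y - x) + σ / 2 * (μ * (2 + μ)) * ‖y - x‖ ^ 2
      ≤ f (y + μ • (y - x)) - f y := by
  have hsub := mul_le_mul_of_nonneg_left (hf.add_inner_add_le_of_mem_subdiff_s16 hw y) hμ.le
  have hext := hf.mul_le_extrapolate hμ x y
  linarith

theorem stmt16_general {n : ℕ} (g h : EuclideanSpace ℝ (Fin n) → ℝ)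
    (g' : EuclideanSpace ℝ (Fin n) → EuclideanSpace ℝ (Fin n)) (L σ ρ ν μ : ℝ)
    (hσ : 0 < σ) (hν : 0 ≤ ν) (hμ : 0 < μ)
    (hgrad : ∀ z, HasGradientAt g (g' z) z)
    (hlip : ∀ u v, ‖g' u - g' v‖ ≤ L * ‖u - v‖)
    (hhs : StrongConvexWith σ h)
    (x y : EuclideanSpace ℝ (Fin n)) (hgy : g' y ∈ subdiff h x)
    (hfail : g (y + μ • (y - x)) - h (y + μ • (y - x)) >
      (g y - h y) - ρ * μ ^ 2 * ‖y - x‖ ^ 2 + ν) :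
    2 * σ / (L + 2 * ρ) < μ := by
  have hg := le_add_inner_add_of_lipschitz_gradient hgrad hlip y (y + μ • (y - x))
  rw [add_sub_cancel_left, real_inner_smul_right, norm_smul, Real.norm_eq_abs, abs_of_pos hμ,
    mul_pow] at hg
  have hh := hhs.inner_add_le_extrapolate_sub hμ hgy (y := y)
  have hgain : 0 < μ * ‖y - x‖ ^ 2 * (μ * (L + 2 * ρ) - 2 * σ - σ * μ) := by
    linarith
  have hslack : 2 * σ < μ * (L + 2 * ρ) := by
    linarith [pos_of_mul_pos_right hgain (by positivity), mul_pos hσ hμ]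
  rw [div_lt_iff₀ (pos_of_mul_pos_right (by linarith) hμ.le)]
  linarith

theorem stmt16 {n : ℕ} (g h : EuclideanSpace ℝ (Fin n) → ℝ)
    (g' : EuclideanSpace ℝ (Fin n) → EuclideanSpace ℝ (Fin n)) (L σ ρ ν μ : ℝ)
    (hL : 0 < L) (hσ : 0 < σ) (hρ : 0 < ρ) (hν : 0 ≤ ν) (hμ : 0 < μ)
    (hgrad : ∀ z, HasGradientAt g (g' z) z)
    (hlip : ∀ u v, ‖g' u - g' v‖ ≤ L * ‖u - v‖)
    (hhs : StrongConvexWith σ h)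
    (x y : EuclideanSpace ℝ (Fin n)) (hd : y - x ≠ 0) (hgy : g' y ∈ subdiff h x)
    (hfail : g (y + μ • (y - x)) - h (y + μ • (y - x)) >
      (g y - h y) - ρ * μ ^ 2 * ‖y - x‖ ^ 2 + ν) :
    2 * σ / (L + 2 * ρ) < μ :=
  stmt16_general g h g' L σ ρ ν μ hσ hν hμ hgrad hlip hhs x y hgy hfail
end
end
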